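/- arXiv:2007.02636 — 2 statements merged into one kernel-verified Lean document; each statement's English description precedes it below -/
import Mathlib

section
/- Let G be a finite group, F an arbitrary field of characteristic 2, and V a nontrivial self-dual irreducible FG-module. Then dim_F V is even. -/
open Module

section Defs
variable {F : Type} [Field F] {G : Type} [Group G]
variable {V W : Type} [AddCommGroup V] [Module F V] [AddCommGroup W] [Module F W]

def IsSubrep (ρ : Representation F G V) (U : Submodule F V) : Prop :=
  ∀ (g : G), ∀ v ∈ U, ρ g v ∈ U

def IsIrred (ρ : Representation F G V) : Prop :=
  Nontrivial V ∧ ∀ U : Submodule F V, IsSubrep ρ U → U = ⊥ ∨ U = ⊤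

def RepIso (ρ : Representation F G V) (σ : Representation F G W) : Prop :=
  ∃ e : V ≃ₗ[F] W, ∀ (g : G) (v : V), e (ρ g v) = σ g (e v)

def IsSelfDual (ρ : Representation F G V) : Prop :=
  RepIso ρ ρ.dual

def IsTrivialRep (ρ : Representation F G V) : Prop := ∀ (g : G) (v : V), ρ g v = v

def EquivHom (σ : Representation F G W) (ρ : Representation F G V) :
    Submodule F (W →ₗ[F] V) where
  carrier := {f | ∀ (g : G) (w : W), f (σ g w) = ρ g (f w)}
  add_mem' := by
    intro f f' hf hf' g w
    simp [LinearMap.add_apply, hf g w, hf' g w]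
  zero_mem' := by intro g w; simp
  smul_mem' := by
    intro c f hf g w
    simp [LinearMap.smul_apply, hf g w]

noncomputable def repMult (σ : Representation F G W) (ρ : Representation F G V) : ℕ :=
  Module.finrank F (EquivHom σ ρ)

def BilinInvariant (ρ : Representation F G V) (B : V →ₗ[F] V →ₗ[F] F) : Prop :=
  ∀ (g : G) (v w : V), B (ρ g v) (ρ g w) = B v w

def Nondeg (B : V →ₗ[F] V →ₗ[F] F) : Prop := ∀ v : V, (∀ w : V, B v w = 0) → v = 0

def IsAltForm (B : V →ₗ[F] V →ₗ[F] F) : Prop := ∀ v : V, B v v = 0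

def PolarizesTo (Q : V → F) (B : V →ₗ[F] V →ₗ[F] F) : Prop :=
  (∀ (a : F) (v : V), Q (a • v) = a ^ 2 * Q v) ∧
    ∀ v w : V, Q (v + w) = Q v + B v w + Q w

def QuadInvariant (ρ : Representation F G V) (Q : V → F) : Prop :=
  ∀ (g : G) (v : V), Q (ρ g v) = Q v

def HasQuadType (ρ : Representation F G V) : Prop :=
  ∃ (Q : V → F) (B : V →ₗ[F] V →ₗ[F] F),
    PolarizesTo Q B ∧ QuadInvariant ρ Q ∧ Nondeg B

def IsSplitting (F G : Type) [Field F] [Group G] : Prop :=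
  ∀ (V : Type) [AddCommGroup V] [Module F V] (ρ : Representation F G V),
    FiniteDimensional F V → IsIrred ρ →
      ∀ f ∈ EquivHom ρ ρ, ∃ c : F, f = c • (LinearMap.id : V →ₗ[F] V)

structure RepOn (F G : Type) [Field F] [Group G] where
  carrier : Type
  [ag : AddCommGroup carrier]
  [md : Module F carrier]
  rep : Representation F G carrier

attribute [instance] RepOn.ag RepOn.md

end Defs


/-!
Self-duality gives a nonzero `G`-invariant bilinear form `B`. In characteristic 2 the form
`B + Bᵀ` is alternating and invariant. If it is nonzero, irreducibility makes it nondegenerate,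
and nondegenerate alternating forms only exist in even dimension. Otherwise `B` is symmetric, and
then `v ↦ B v v` is additive, so its zero set is an invariant subspace. It cannot be `0`, since it
contains every `ρ g v - v` and `ρ` is nontrivial; hence it is everything, i.e. `B` itself is
alternating, and we conclude as before.
-/

namespace LinearMap.BilinForm

variable {F V : Type*} [Field F] [AddCommGroup V] [Module F V] {B : LinearMap.BilinForm F V}

section Alternating

theorem IsAlt.eq_zero_of_apply_smul_add_smul (hB : B.IsAlt) {v w : V} (hvw : B v w ≠ 0)
    {a b : F} (hv : B (a • v + b • w) v = 0) (hw : B (a • v + b • w) w = 0) :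
    a = 0 ∧ b = 0 := by
  have hwv : B w v ≠ 0 := by rwa [← hB.neg_eq, neg_ne_zero]
  simp only [map_add, map_smul, LinearMap.add_apply, LinearMap.smul_apply, smul_eq_mul,
    hB.self_eq_zero, mul_zero, add_zero, zero_add] at hv hw
  exact ⟨(mul_eq_zero.1 hw).resolve_right hvw, (mul_eq_zero.1 hv).resolve_right hwv⟩

theorem IsAlt.linearIndependent_pair (hB : B.IsAlt) {v w : V} (hvw : B v w ≠ 0) :
    LinearIndependent F ![v, w] :=
  LinearIndependent.pair_iff.2 fun a b hab =>
    hB.eq_zero_of_apply_smul_add_smul hvw (by simp [hab]) (by simp [hab])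

theorem IsAlt.nondegenerate_restrict_span_pair [FiniteDimensional F V] (hB : B.IsAlt)
    {v w : V} (hvw : B v w ≠ 0) : (B.restrict (Submodule.span F {v, w})).Nondegenerate := by
  refine .ofSeparatingLeft fun ⟨u, hu⟩ hu_ker => ?_
  obtain ⟨a, b, rfl⟩ := Submodule.mem_span_pair.1 hu
  obtain ⟨rfl, rfl⟩ := hB.eq_zero_of_apply_smul_add_smul hvw
    (hu_ker ⟨v, Submodule.subset_span (by simp)⟩) (hu_ker ⟨w, Submodule.subset_span (by simp)⟩)
  simp

theorem IsAlt.exists_finrank_add_two_eq [FiniteDimensional F V] [Nontrivial V]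
    (hB : B.IsAlt) (hnd : B.Nondegenerate) :
    ∃ W : Submodule F V, (B.restrict W).IsAlt ∧ (B.restrict W).Nondegenerate ∧
      finrank F W + 2 = finrank F V := by
  obtain ⟨v, hv⟩ := exists_ne (0 : V)
  obtain ⟨w, hvw⟩ : ∃ w, B v w ≠ 0 := by
    by_contra! h
    exact hv (hnd.1 v h)
  have hPrank : finrank F (Submodule.span F {v, w}) = 2 := by
    rw [← Matrix.range_cons_cons_empty v w ![], finrank_span_eq_card (hB.linearIndependent_pair hvw),
      Fintype.card_fin]
  set P := Submodule.span F {v, w}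
  have hP : (B.restrict P).Nondegenerate := hB.nondegenerate_restrict_span_pair hvw
  have hPcompl : IsCompl P (B.orthogonal P) :=
    isCompl_orthogonal_of_restrict_nondegenerate hB.isRefl hP
  refine ⟨B.orthogonal P, fun x => hB.self_eq_zero x, ?_, ?_⟩
  · refine nondegenerate_restrict_of_disjoint_orthogonal B hB.isRefl ?_
    rw [orthogonal_orthogonal hnd hB.isRefl]
    exact hPcompl.disjoint.symm
  · rw [← Submodule.finrank_add_eq_of_isCompl hPcompl, hPrank, add_comm]

theorem IsAlt.even_finrank [FiniteDimensional F V] (hB : B.IsAlt) (hnd : B.Nondegenerate) :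
    Even (finrank F V) := by
  induction h : finrank F V using Nat.strong_induction_on generalizing V with
  | _ n ih =>
    rcases Nat.eq_zero_or_pos n with rfl | hpos
    · exact Even.zero
    have : Nontrivial V := Module.nontrivial_of_finrank_pos (R := F) (h ▸ hpos)
    obtain ⟨W, hWalt, hWnd, hW⟩ := hB.exists_finrank_add_two_eq hnd
    rw [← h, ← hW]
    exact (ih _ (by omega) hWalt hWnd rfl).add even_two

end Alternating

section CharTwo

variable [CharP F 2]

theorem isAlt_add_flip (B : LinearMap.BilinForm F V) : (B + B.flip).IsAlt :=
  fun v => CharTwo.add_self_eq_zero (B v v)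

theorem isSymm_of_add_flip_eq_zero (h : B + B.flip = 0) : B.IsSymm := by
  refine isSymm_def.2 fun x y => ?_
  have hxy : B x y + B y x = 0 := LinearMap.congr_fun₂ h x y
  rwa [add_eq_zero_iff_eq_neg, CharTwo.neg_eq] at hxy

theorem IsSymm.apply_add_add (hB : B.IsSymm) (x y : V) :
    B (x + y) (x + y) = B x x + B y y := by
  simp only [map_add, LinearMap.add_apply, hB.eq y x]
  linear_combination CharTwo.add_self_eq_zero (B x y)

def isotropicSubmodule (B : LinearMap.BilinForm F V) (hB : B.IsSymm) : Submodule F V where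
  carrier := {v | B v v = 0}
  add_mem' {x y} (hx : B x x = 0) (hy : B y y = 0) := by
    change B (x + y) (x + y) = 0
    rw [hB.apply_add_add, hx, hy, add_zero]
  zero_mem' := by simp
  smul_mem' c x (hx : B x x = 0) := by simp [hx]

theorem mem_isotropicSubmodule (hB : B.IsSymm) {v : V} :
    v ∈ B.isotropicSubmodule hB ↔ B v v = 0 :=
  Iff.rfl

end CharTwo

end LinearMap.BilinForm

open LinearMap.BilinForm

section Representation

variable {F G V : Type} [Field F] [Group G] [AddCommGroup V] [Module F V]
  {ρ : Representation F G V} {B C : LinearMap.BilinForm F V}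

theorem BilinInvariant.flip (hB : BilinInvariant ρ B) : BilinInvariant ρ B.flip :=
  fun g v w => hB g w v

theorem BilinInvariant.add (hB : BilinInvariant ρ B) (hC : BilinInvariant ρ C) :
    BilinInvariant ρ (B + C) :=
  fun g v w => by simp [hB g v w, hC g v w]

theorem BilinInvariant.isSubrep_ker (hB : BilinInvariant ρ B) : IsSubrep ρ (LinearMap.ker B) := by
  intro g v hv
  rw [LinearMap.mem_ker] at hv ⊢
  ext w
  rw [← ρ.self_inv_apply g w, hB, hv, LinearMap.zero_apply, LinearMap.zero_apply]

theorem IsIrred.nondegenerate_of_bilinInvariant [FiniteDimensional F V] (hirr : IsIrred ρ)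
    (hB : BilinInvariant ρ B) (hB0 : B ≠ 0) : B.Nondegenerate := by
  rcases hirr.2 _ hB.isSubrep_ker with hker | hker
  · exact nondegenerate_iff_ker_eq_bot.2 hker
  · exact absurd (LinearMap.ker_eq_top.1 hker) hB0

theorem IsSelfDual.exists_nondegenerate_bilinInvariant [FiniteDimensional F V]
    (hsd : IsSelfDual ρ) : ∃ B : LinearMap.BilinForm F V, B.Nondegenerate ∧ BilinInvariant ρ B := by
  obtain ⟨e, he⟩ := hsd
  refine ⟨e.toLinearMap, nondegenerate_iff_ker_eq_bot.2 e.ker, fun g v w => ?_⟩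
  change e (ρ g v) (ρ g w) = e v w
  rw [he, Representation.dual_apply]
  exact congrArg (e v) (ρ.inv_self_apply g w)

section CharTwo

variable [CharP F 2]

theorem BilinInvariant.isSubrep_isotropicSubmodule (hB : BilinInvariant ρ B) (hsymm : B.IsSymm) :
    IsSubrep ρ (B.isotropicSubmodule hsymm) := by
  intro g v hv
  rw [mem_isotropicSubmodule] at hv ⊢
  rwa [hB]

theorem BilinInvariant.isTrivialRep_of_isotropicSubmodule_eq_bot (hB : BilinInvariant ρ B)
    (hsymm : B.IsSymm) (hbot : B.isotropicSubmodule hsymm = ⊥) : IsTrivialRep ρ := by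
  intro g v
  have hmem : ρ g v - v ∈ B.isotropicSubmodule hsymm := by
    rw [mem_isotropicSubmodule, sub_eq_add_neg, hsymm.apply_add_add, hB]
    simp [CharTwo.add_self_eq_zero]
  rw [hbot, Submodule.mem_bot, sub_eq_zero] at hmem
  exact hmem

theorem IsIrred.exists_isAlt_bilinInvariant_ne_zero (hirr : IsIrred ρ) (hnt : ¬ IsTrivialRep ρ)
    (hB : BilinInvariant ρ B) (hB0 : B ≠ 0) :
    ∃ A : LinearMap.BilinForm F V, A.IsAlt ∧ A ≠ 0 ∧ BilinInvariant ρ A := by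
  by_cases hsymm : B.IsSymm
  · rcases hirr.2 _ (hB.isSubrep_isotropicSubmodule hsymm) with hbot | htop
    · exact absurd (hB.isTrivialRep_of_isotropicSubmodule_eq_bot hsymm hbot) hnt
    · refine ⟨B, fun v => ?_, hB0, hB⟩
      exact (mem_isotropicSubmodule hsymm).1 (htop ▸ Submodule.mem_top)
  · exact ⟨B + B.flip, isAlt_add_flip B, fun h => hsymm (isSymm_of_add_flip_eq_zero h),
      hB.add hB.flip⟩

end CharTwo

end Representation

theorem stmt_1_general {F : Type} [Field F] [CharP F 2] {G : Type} [Group G]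
    {V : Type} [AddCommGroup V] [Module F V] [FiniteDimensional F V]
    (ρ : Representation F G V) (hirr : IsIrred ρ) (hnt : ¬ IsTrivialRep ρ)
    (hsd : IsSelfDual ρ) :
    Even (Module.finrank F V) := by
  have : Nontrivial V := hirr.1
  obtain ⟨B, hBnd, hBinv⟩ := hsd.exists_nondegenerate_bilinInvariant
  obtain ⟨A, hAalt, hA0, hAinv⟩ := hirr.exists_isAlt_bilinInvariant_ne_zero hnt hBinv hBnd.ne_zero
  exact hAalt.even_finrank (hirr.nondegenerate_of_bilinInvariant hAinv hA0)

/-- a nontrivial self-dual irreducible module in characteristic 2 has even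
dimension. -/
theorem stmt_1 {F : Type} [Field F] [CharP F 2] {G : Type} [Group G] [Finite G]
    {V : Type} [AddCommGroup V] [Module F V] [FiniteDimensional F V]
    (ρ : Representation F G V) (hirr : IsIrred ρ) (hnt : ¬ IsTrivialRep ρ)
    (hsd : IsSelfDual ρ) :
    Even (Module.finrank F V) :=
  stmt_1_general ρ hirr hnt hsd
end

section
/- Let G be a finite group, N a normal subgroup, F a perfect splitting field of characteristic 2, and W an irreducible FN-module with W ≇ W*. Then every self-dual irreducible FG-module V whose restriction V↓_N contains W admits a non-degenerate G-invariant quadratic form (is of quadratic type). -/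
open Module

/-!
Self-duality of `V` gives a nondegenerate `G`-invariant form `B`; by Schur `Bᵗ = c • B`, and
`c ^ 2 = 1` forces `c = 1` in characteristic `2`, so `B` is symmetric.

Restricted to `N`, `V` is the sum of the `G`-conjugates of the image of `W`. These are simple, and
since `W` is not self-dual no nonzero `N`-invariant form lives on any of them. Hence `V↓N` is
semisimple and, splitting off such pieces one at a time, there is an `N`-invariant form `β` with
`β + βᵗ = B`; then `Q v = β v v` polarizes to `B`. For `g ∈ G` the defect `Q ∘ ρ g - Q` is the
diagonal of the `N`-invariant form `δ = β (ρ g ·) (ρ g ·) - β`, which satisfies `δ + δᵗ = 0`.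
Such a diagonal is additive and vanishes on each conjugate of the image of `W`, so it is zero.
-/

section Subreps

variable {F : Type} [Field F] {H : Type} [Group H]
variable {V W : Type} [AddCommGroup V] [Module F V] [AddCommGroup W] [Module F W]
variable {τ : Representation F H V} {σ : Representation F H W}

def IsSimpleSubrep (τ : Representation F H V) (U : Submodule F V) : Prop :=
  IsSubrep τ U ∧ U ≠ ⊥ ∧ ∀ U', IsSubrep τ U' → U' ≤ U → U' = ⊥ ∨ U' = U

def InvariantFormsVanishOn (τ : Representation F H V) (U : Submodule F V) : Prop :=
  ∀ P : V →ₗ[F] V →ₗ[F] F, BilinInvariant τ P → ∀ v ∈ U, ∀ w ∈ U, P v w = 0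

lemma isSubrep_iff_mem_invtSubmodule {U : Submodule F V} :
    IsSubrep τ U ↔ U ∈ τ.invtSubmodule := by
  rw [Representation.mem_invtSubmodule]
  rfl

lemma IsSubrep.sup {U U' : Submodule F V} (hU : IsSubrep τ U) (hU' : IsSubrep τ U') :
    IsSubrep τ (U ⊔ U') := by
  rw [isSubrep_iff_mem_invtSubmodule] at *
  exact Sublattice.sup_mem hU hU'

lemma IsSubrep.inf {U U' : Submodule F V} (hU : IsSubrep τ U) (hU' : IsSubrep τ U') :
    IsSubrep τ (U ⊓ U') := by
  rw [isSubrep_iff_mem_invtSubmodule] at *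
  exact Sublattice.inf_mem hU hU'

lemma isSubrep_sSup {S : Set (Submodule F V)} (hS : ∀ h, ∀ U ∈ S, U.map (τ h) ∈ S) :
    IsSubrep τ (sSup S) := by
  intro h v hv
  have hle : (sSup S).map (τ h) ≤ sSup S := by
    rw [(Submodule.gc_map_comap (τ h)).l_sSup]
    exact iSup₂_le fun U hU => le_sSup (hS h U hU)
  exact hle (Submodule.mem_map_of_mem hv)

lemma IsSubrep.map {f : W →ₗ[F] V} (hf : f ∈ EquivHom σ τ) {U : Submodule F W}
    (hU : IsSubrep σ U) : IsSubrep τ (U.map f) := by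
  rintro h _ ⟨u, hu, rfl⟩
  exact ⟨σ h u, hU h u hu, hf h u⟩

lemma BilinInvariant.compl₁₂ {P : V →ₗ[F] V →ₗ[F] F} (hP : BilinInvariant τ P)
    {f g : W →ₗ[F] V} (hf : f ∈ EquivHom σ τ) (hg : g ∈ EquivHom σ τ) :
    BilinInvariant σ (P.compl₁₂ f g) := by
  intro h v w
  simp only [LinearMap.compl₁₂_apply, hf h, hg h, hP h]

lemma BilinInvariant.apply_rep {P : V →ₗ[F] V →ₗ[F] F} (hP : BilinInvariant τ P) (h : H)
    (v : V) : P (τ h v) = τ.dual h (P v) := by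
  ext w
  rw [Representation.dual_apply, Dual.transpose_apply, LinearMap.comp_apply,
    ← hP h v (τ h⁻¹ w), Representation.self_inv_apply]

lemma InvariantFormsVanishOn.map {f : W →ₗ[F] V} (hf : f ∈ EquivHom σ τ) {U : Submodule F W}
    (hU : InvariantFormsVanishOn σ U) : InvariantFormsVanishOn τ (U.map f) := by
  rintro P hP _ ⟨v, hv, rfl⟩ _ ⟨w, hw, rfl⟩
  exact hU _ (hP.compl₁₂ hf hf) v hv w hw

lemma isSimpleSubrep_range (hσ : IsIrred σ) {f : W →ₗ[F] V} (hf : f ∈ EquivHom σ τ)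
    (hf0 : f ≠ 0) : IsSimpleSubrep τ (LinearMap.range f) := by
  have htop : IsSubrep σ ⊤ := fun _ _ _ => trivial
  refine ⟨by simpa using htop.map hf, by rwa [ne_eq, LinearMap.range_eq_bot], ?_⟩
  intro U hU hle
  have hpre : IsSubrep σ (U.comap f) := fun h w hw => by
    simpa [Submodule.mem_comap, hf h w] using hU h (f w) hw
  rcases hσ.2 _ hpre with h | h
  · left
    rw [← Submodule.map_comap_eq_of_le hle, h, Submodule.map_bot]
  · right
    exact le_antisymm hle (by rw [LinearMap.range_eq_map, ← h]; exact Submodule.map_comap_le f U)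

end Subreps

section Forms

variable {F : Type} [Field F] {H : Type} [Group H]
variable {V : Type} [AddCommGroup V] [Module F V]
variable {τ : Representation F H V}

lemma isSelfDual_of_bilinInvariant [FiniteDimensional F V] (hτ : IsIrred τ)
    {P : V →ₗ[F] V →ₗ[F] F} (hP : BilinInvariant τ P) (hP0 : P ≠ 0) : IsSelfDual τ := by
  have hker : IsSubrep τ (LinearMap.ker P) := by
    intro h v hv
    rw [LinearMap.mem_ker] at hv ⊢
    rw [hP.apply_rep, hv, map_zero]
  have hinj : Function.Injective P := by
    rw [← LinearMap.ker_eq_bot]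
    exact (hτ.2 _ hker).resolve_right fun h => hP0 (LinearMap.ker_eq_top.mp h)
  exact ⟨P.linearEquivOfInjective hinj Subspace.dual_finrank_eq.symm, hP.apply_rep⟩

lemma invariantFormsVanishOn_top [FiniteDimensional F V] (hτ : IsIrred τ)
    (hnsd : ¬ IsSelfDual τ) : InvariantFormsVanishOn τ ⊤ := by
  intro P hP v _ w _
  have hP0 : P = 0 := by_contra fun h => hnsd (isSelfDual_of_bilinInvariant hτ hP h)
  rw [hP0, LinearMap.zero_apply, LinearMap.zero_apply]

lemma exists_bilinInvariant_nondeg_of_isSelfDual (hτ : IsSelfDual τ) :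
    ∃ B : V →ₗ[F] V →ₗ[F] F, BilinInvariant τ B ∧ Nondeg B := by
  obtain ⟨e, he⟩ := hτ
  refine ⟨e.toLinearMap, fun h v w => ?_, fun v hv => e.map_eq_zero_iff.mp (LinearMap.ext hv)⟩
  simp only [LinearEquiv.coe_coe, he, Representation.dual_apply, Dual.transpose_apply,
    LinearMap.comp_apply, Representation.inv_self_apply]

lemma isSplitting_of_top {G : Type} [Group G] (h : IsSplitting F ↥(⊤ : Subgroup G)) :
    IsSplitting F G := by
  intro V _ _ ρ hfin hirr f hf
  refine h V (ρ.comp (⊤ : Subgroup G).subtype) hfin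
    ⟨hirr.1, fun U hU => hirr.2 U fun g => hU ⟨g, trivial⟩⟩ f fun g => hf g

lemma exists_flip_eq_smul_of_isSplitting [FiniteDimensional F V] (hsplit : IsSplitting F H)
    (hτ : IsIrred τ) {B : V →ₗ[F] V →ₗ[F] F} (hB : BilinInvariant τ B) (hBnd : Nondeg B) :
    ∃ c : F, B.flip = c • B := by
  have hinj : Function.Injective B :=
    LinearMap.ker_eq_bot.mp (LinearMap.ker_eq_bot'.mpr fun v hv => hBnd v (LinearMap.congr_fun hv))
  let e := B.linearEquivOfInjective hinj Subspace.dual_finrank_eq.symm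
  have hBflip : BilinInvariant τ B.flip := fun h v w => hB h w v
  have hφ : (e.symm.toLinearMap ∘ₗ B.flip) ∈ EquivHom τ τ := by
    intro h v
    apply e.injective
    change e (e.symm _) = B (τ h (e.symm (B.flip v)))
    rw [hB.apply_rep, e.apply_symm_apply, hBflip.apply_rep]
    exact congrArg (τ.dual h) (e.apply_symm_apply _).symm
  obtain ⟨c, hc⟩ := hsplit V τ inferInstance hτ _ hφ
  refine ⟨c, LinearMap.ext fun v => ?_⟩
  calc B.flip v = e (e.symm (B.flip v)) := (e.apply_symm_apply _).symm
    _ = e (c • v) := congrArg e (LinearMap.congr_fun hc v)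
    _ = (c • B) v := map_smul e c v

lemma flip_eq_self_of_isSplitting [CharP F 2] [FiniteDimensional F V] (hsplit : IsSplitting F H)
    (hτ : IsIrred τ) {B : V →ₗ[F] V →ₗ[F] F} (hB : BilinInvariant τ B) (hBnd : Nondeg B) :
    B.flip = B := by
  obtain ⟨c, hc⟩ := exists_flip_eq_smul_of_isSplitting hsplit hτ hB hBnd
  obtain ⟨v, w, hvw⟩ : ∃ v w, B v w ≠ 0 := by
    obtain ⟨v, hv⟩ := @exists_ne V hτ.1 0
    by_contra! h
    exact hv (hBnd v (h v))
  have hcc : c ^ 2 = 1 := by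
    have hwv : B w v = c * B v w := LinearMap.congr_fun₂ hc v w
    have hvw' : B v w = c * B w v := LinearMap.congr_fun₂ hc w v
    refine mul_right_cancel₀ hvw ?_
    rw [sq, mul_assoc, ← hwv, ← hvw', one_mul]
  have hc1 : c = 1 := by
    have : (c + 1) ^ 2 = 0 := by rw [CharTwo.add_sq, hcc, one_pow, CharTwo.add_self_eq_zero]
    rw [← CharTwo.neg_eq (1 : F), ← add_eq_zero_iff_eq_neg]
    exact pow_eq_zero_iff two_ne_zero |>.mp this
  rw [hc, hc1, one_smul]

end Forms

section Semisimple

variable {F : Type} [Field F] {H : Type} [Group H]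
variable {V : Type} [AddCommGroup V] [Module F V]
variable {τ : Representation F H V}

lemma IsSimpleSubrep.disjoint_of_not_le {A X : Submodule F V} (hA : IsSimpleSubrep τ A)
    (hX : IsSubrep τ X) (hAX : ¬ A ≤ X) : Disjoint A X := by
  rw [disjoint_iff]
  exact (hA.2.2 _ (hA.1.inf hX) inf_le_left).resolve_right fun h => hAX (h ▸ inf_le_right)

lemma exists_isCompl_of_sSup_simple [FiniteDimensional F V]
    (hss : sSup {U | IsSimpleSubrep τ U} = ⊤) {T : Submodule F V} (hT : IsSubrep τ T) :
    ∃ C, IsSubrep τ C ∧ IsCompl T C := by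
  obtain ⟨C, ⟨hC, hTC⟩, hmax⟩ := set_has_maximal_iff_noetherian.mpr inferInstance
    {C | IsSubrep τ C ∧ Disjoint T C} ⟨⊥, fun _ _ hv => by simp_all, disjoint_bot_right⟩
  refine ⟨C, hC, hTC, codisjoint_iff.mpr ?_⟩
  by_contra hne
  obtain ⟨A, hA, hAle⟩ : ∃ A, IsSimpleSubrep τ A ∧ ¬ A ≤ T ⊔ C := by
    by_contra! h
    exact hne (top_le_iff.mp (hss ▸ sSup_le h))
  -- adding a simple `A` outside `T ⊔ C` to `C` keeps it disjoint from `T` (modularity)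
  refine hmax (C ⊔ A) ⟨hC.sup hA.1, hTC.disjoint_sup_right_of_disjoint_sup_left
    (hA.disjoint_of_not_le (hT.sup hC) hAle).symm⟩ (left_lt_sup.mpr fun h => hAle ?_)
  exact h.trans le_sup_right

lemma projection_mem_equivHom {T C : Submodule F V} (hT : IsSubrep τ T) (hC : IsSubrep τ C)
    (hTC : IsCompl T C) : T.projection C hTC ∈ EquivHom τ τ := by
  intro h v
  have hcomm : Commute (T.projection C hTC) (τ h) :=
    (LinearMap.IsIdempotentElem.commute_iff (Submodule.isIdempotentElem_projection hTC)).mpr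
      ⟨by rw [Submodule.range_projection]; exact hT h, by rw [Submodule.ker_projection]; exact hC h⟩
  exact LinearMap.congr_fun hcomm v

lemma exists_le_invariantFormsVanishOn {K C : Submodule F V} (hK : IsSubrep τ K)
    (hC : IsSubrep τ C) (hKC : IsCompl K C) (hK0 : K ≠ ⊥)
    (hspan : sSup {U | IsSubrep τ U ∧ InvariantFormsVanishOn τ U} = ⊤) :
    ∃ A ≤ K, A ≠ ⊥ ∧ IsSubrep τ A ∧ InvariantFormsVanishOn τ A := by
  have hπ := projection_mem_equivHom hK hC hKC
  obtain ⟨A, ⟨hA, hAv⟩, hAC⟩ :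
      ∃ A ∈ {U | IsSubrep τ U ∧ InvariantFormsVanishOn τ U}, ¬ A ≤ C := by
    by_contra! h
    exact hK0 (disjoint_top.mp (top_le_iff.mp (hspan ▸ sSup_le h) ▸ hKC.disjoint))
  refine ⟨A.map (K.projection C hKC), ?_, ?_, hA.map hπ, hAv.map hπ⟩
  · exact (LinearMap.map_le_range).trans (Submodule.range_projection hKC).le
  · rwa [ne_eq, ← LinearMap.le_ker_iff_map, Submodule.ker_projection]

lemma exists_bilinInvariant_add_flip_eq_on [FiniteDimensional F V]
    (hspan : sSup {U | IsSimpleSubrep τ U ∧ InvariantFormsVanishOn τ U} = ⊤)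
    {B : V →ₗ[F] V →ₗ[F] F} (hB : BilinInvariant τ B) (hBsymm : B.flip = B)
    (K : Submodule F V) (hK : IsSubrep τ K) :
    ∃ β : V →ₗ[F] V →ₗ[F] F, BilinInvariant τ β ∧ ∀ x ∈ K, ∀ y ∈ K, β x y + β y x = B x y := by
  have hss : sSup {U | IsSimpleSubrep τ U} = ⊤ :=
    top_le_iff.mp (hspan ▸ sSup_le_sSup fun U hU => hU.1)
  have hspan' : sSup {U | IsSubrep τ U ∧ InvariantFormsVanishOn τ U} = ⊤ :=
    top_le_iff.mp (hspan ▸ sSup_le_sSup fun U hU => ⟨hU.1.1, hU.2⟩)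
  induction K using WellFoundedLT.induction with
  | _ K ih =>
  by_cases hK0 : K = ⊥
  · subst hK0
    refine ⟨0, fun _ _ _ => rfl, fun x hx y _ => ?_⟩
    rw [(Submodule.mem_bot F).mp hx]
    simp
  -- split off a piece `A ≤ K` on which `B` vanishes, and recurse on `K ⊓ D` for a complement `D`
  obtain ⟨C, hC, hKC⟩ := exists_isCompl_of_sSup_simple hss hK
  obtain ⟨A, hAK, hA0, hA, hAv⟩ := exists_le_invariantFormsVanishOn hK hC hKC hK0 hspan'
  obtain ⟨D, hD, hAD⟩ := exists_isCompl_of_sSup_simple hss hA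
  have hlt : K ⊓ D < K :=
    inf_lt_left.mpr fun hKD => hA0 (disjoint_self.mp (hAD.disjoint.mono_right (hAK.trans hKD)))
  obtain ⟨β', hβ', hβ'K⟩ := ih _ hlt (hK.inf hD)
  have hπ := projection_mem_equivHom hA hD hAD
  have hπ' := projection_mem_equivHom hD hA hAD.symm
  set π := A.projection D hAD
  set π' := D.projection A hAD.symm
  refine ⟨B.compl₁₂ π π' + β'.compl₁₂ π' π', fun h v w => ?_, fun x hx y hy => ?_⟩
  · simp only [LinearMap.add_apply, (hB.compl₁₂ hπ hπ') h v w, (hβ'.compl₁₂ hπ' hπ') h v w]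
  have hmem : ∀ z ∈ K, π' z ∈ K ⊓ D := fun z hz =>
    ⟨by rw [Submodule.projection_eq_self_sub_projection hAD]
        exact K.sub_mem hz (hAK (Submodule.projection_apply_mem hAD z)),
      Submodule.projection_apply_mem hAD.symm z⟩
  have hAA : B (π x) (π y) = 0 := hAv B hB _ (Submodule.projection_apply_mem hAD x) _
    (Submodule.projection_apply_mem hAD y)
  have hsymm : B (π' x) (π y) = B (π y) (π' x) := LinearMap.congr_fun₂ hBsymm.symm _ _
  have hsplit : B x y = B (π x + π' x) (π y + π' y) := by
    rw [Submodule.projection_add_projection_eq_self, Submodule.projection_add_projection_eq_self]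
  simp only [LinearMap.add_apply, LinearMap.compl₁₂_apply, map_add] at hsplit ⊢
  linear_combination hβ'K _ (hmem x hx) _ (hmem y hy) - hsplit - hAA - hsymm

end Semisimple

section Diagonal

variable {F : Type} [Field F] {H : Type} [Group H]
variable {V : Type} [AddCommGroup V] [Module F V]
variable {τ : Representation F H V}

lemma BilinInvariant.apply_self_eq_zero {δ : V →ₗ[F] V →ₗ[F] F} (hδ : BilinInvariant τ δ)
    (hskew : ∀ x y, δ x y + δ y x = 0) (hspan : sSup {U | InvariantFormsVanishOn τ U} = ⊤)
    (v : V) : δ v v = 0 := by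
  have hv : v ∈ ⨆ U : {U | InvariantFormsVanishOn τ U}, (U : Submodule F V) := by
    rw [← sSup_eq_iSup', hspan]
    trivial
  refine Submodule.iSup_induction _ (motive := fun x => δ x x = 0) hv
    (fun U x hx => U.2 δ hδ x hx x hx) (by simp) fun x y hx hy => ?_
  simp only [map_add, LinearMap.add_apply, hx, hy]
  linear_combination hskew x y

lemma polarizesTo_diag {β B : V →ₗ[F] V →ₗ[F] F} (hβB : ∀ x y, β x y + β y x = B x y) :
    PolarizesTo (fun v => β v v) B := by
  refine ⟨fun a v => ?_, fun v w => ?_⟩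
  · simp only [map_smul, LinearMap.smul_apply, smul_eq_mul]
    ring
  · simp only [map_add, LinearMap.add_apply, ← hβB v w]
    ring

end Diagonal

section Normal

variable {F : Type} [Field F] {G : Type} [Group G] {N : Subgroup G} [N.Normal]
variable {V : Type} [AddCommGroup V] [Module F V]
variable {ρ : Representation F G V}

lemma rep_apply_rep_apply (g h : G) (x : V) : ρ g (ρ h x) = ρ (g * h) x := by
  rw [map_mul, Module.End.mul_apply]

lemma map_rep_map_rep_inv (U : Submodule F V) (g : G) : (U.map (ρ g⁻¹)).map (ρ g) = U := by
  rw [← Submodule.map_comp, ← Module.End.mul_eq_comp, ← map_mul, mul_inv_cancel, map_one,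
    Module.End.one_eq_id, Submodule.map_id]

lemma BilinInvariant.compl₁₂_rep {P : V →ₗ[F] V →ₗ[F] F}
    (hP : BilinInvariant (ρ.comp N.subtype) P) (g : G) :
    BilinInvariant (ρ.comp N.subtype) (P.compl₁₂ (ρ g) (ρ g)) := by
  intro n x y
  have hconj : ∀ z, ρ g (ρ n z) = ρ (g * n * g⁻¹) (ρ g z) := fun z => by
    rw [rep_apply_rep_apply, rep_apply_rep_apply, inv_mul_cancel_right]
  change P (ρ g (ρ n x)) (ρ g (ρ n y)) = P (ρ g x) (ρ g y)
  rw [hconj, hconj]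
  exact hP ⟨_, ‹N.Normal›.conj_mem (n : G) n.2 g⟩ (ρ g x) (ρ g y)

lemma IsSubrep.map_rep {U : Submodule F V} (hU : IsSubrep (ρ.comp N.subtype) U) (g : G) :
    IsSubrep (ρ.comp N.subtype) (U.map (ρ g)) := by
  rintro n _ ⟨u, hu, rfl⟩
  have hmem : g⁻¹ * n * g ∈ N := by
    simpa using ‹N.Normal›.conj_mem (n : G) n.2 g⁻¹
  refine ⟨ρ (g⁻¹ * n * g) u, hU ⟨_, hmem⟩ u hu, ?_⟩
  change ρ g (ρ (g⁻¹ * n * g) u) = ρ n (ρ g u)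
  rw [rep_apply_rep_apply, rep_apply_rep_apply, mul_assoc g⁻¹, mul_inv_cancel_left]

lemma InvariantFormsVanishOn.map_rep {U : Submodule F V}
    (hU : InvariantFormsVanishOn (ρ.comp N.subtype) U) (g : G) :
    InvariantFormsVanishOn (ρ.comp N.subtype) (U.map (ρ g)) := by
  rintro P hP _ ⟨v, hv, rfl⟩ _ ⟨w, hw, rfl⟩
  exact hU _ (hP.compl₁₂_rep g) v hv w hw

lemma IsSimpleSubrep.map_rep {U : Submodule F V} (hU : IsSimpleSubrep (ρ.comp N.subtype) U)
    (g : G) : IsSimpleSubrep (ρ.comp N.subtype) (U.map (ρ g)) := by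
  have hback : (U.map (ρ g)).map (ρ g⁻¹) = U := by simpa using map_rep_map_rep_inv U g⁻¹
  refine ⟨hU.1.map_rep g, fun h => hU.2.1 (by rw [← hback, h, Submodule.map_bot]), ?_⟩
  intro U' hU' hle
  rw [← map_rep_map_rep_inv U' g]
  rcases hU.2.2 _ (hU'.map_rep g⁻¹) (hback ▸ Submodule.map_mono hle) with h | h
  · exact Or.inl (by rw [h, Submodule.map_bot])
  · exact Or.inr (by rw [h])

lemma sSup_simple_invariantFormsVanishOn_eq_top (hρ : IsIrred ρ) {U₀ : Submodule F V}
    (hU₀ : IsSimpleSubrep (ρ.comp N.subtype) U₀)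
    (hU₀' : InvariantFormsVanishOn (ρ.comp N.subtype) U₀) :
    sSup {U | IsSimpleSubrep (ρ.comp N.subtype) U ∧ InvariantFormsVanishOn (ρ.comp N.subtype) U}
      = ⊤ := by
  have hS : IsSubrep ρ (sSup {U | IsSimpleSubrep (ρ.comp N.subtype) U ∧
      InvariantFormsVanishOn (ρ.comp N.subtype) U}) :=
    isSubrep_sSup fun g U hU => ⟨hU.1.map_rep g, hU.2.map_rep g⟩
  refine (hρ.2 _ hS).resolve_left fun h => hU₀.2.1 (eq_bot_mono (le_sSup ?_) h)
  exact ⟨hU₀, hU₀'⟩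

lemma quadInvariant_diag {B β : V →ₗ[F] V →ₗ[F] F} (hB : BilinInvariant ρ B)
    (hβ : BilinInvariant (ρ.comp N.subtype) β) (hβB : ∀ x y, β x y + β y x = B x y)
    (hspan : sSup {U | InvariantFormsVanishOn (ρ.comp N.subtype) U} = ⊤) :
    QuadInvariant ρ (fun v => β v v) := by
  intro g v
  have hδ : BilinInvariant (ρ.comp N.subtype) (β.compl₁₂ (ρ g) (ρ g) - β) := fun n x y => by
    simp only [LinearMap.sub_apply, (hβ.compl₁₂_rep g) n x y, hβ n x y]
  have hskew : ∀ x y, (β.compl₁₂ (ρ g) (ρ g) - β) x y + (β.compl₁₂ (ρ g) (ρ g) - β) y x = 0 :=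
    fun x y => by
      simp only [LinearMap.sub_apply, LinearMap.compl₁₂_apply]
      linear_combination hβB (ρ g x) (ρ g y) - hβB x y + hB g x y
  exact sub_eq_zero.mp (hδ.apply_self_eq_zero hskew hspan v)

end Normal

theorem stmt_14_general {F : Type} [Field F] [CharP F 2]
    {G : Type} [Group G] (N : Subgroup G) [N.Normal]
    (hsplit : ∀ H : Subgroup G, IsSplitting F ↥H)
    {W : Type} [AddCommGroup W] [Module F W] [FiniteDimensional F W]
    (σ : Representation F ↥N W) (hirrW : IsIrred σ) (hnsd : ¬ IsSelfDual σ)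
    {V : Type} [AddCommGroup V] [Module F V] [FiniteDimensional F V]
    (ρ : Representation F G V) (hirrV : IsIrred ρ) (hsdV : IsSelfDual ρ)
    (hover : EquivHom σ (ρ.comp N.subtype) ≠ ⊥) :
    HasQuadType ρ := by
  obtain ⟨B, hB, hBnd⟩ := exists_bilinInvariant_nondeg_of_isSelfDual hsdV
  have hBsymm : B.flip = B :=
    flip_eq_self_of_isSplitting (isSplitting_of_top (hsplit ⊤)) hirrV hB hBnd
  obtain ⟨f, hf, hf0⟩ := Submodule.exists_mem_ne_zero_of_ne_bot hover
  have hspan := sSup_simple_invariantFormsVanishOn_eq_top hirrV (isSimpleSubrep_range hirrW hf hf0)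
    (by simpa using (invariantFormsVanishOn_top hirrW hnsd).map hf)
  obtain ⟨β, hβ, hβB⟩ :=
    exists_bilinInvariant_add_flip_eq_on hspan (fun n => hB n) hBsymm ⊤ fun _ _ _ => trivial
  replace hβB : ∀ x y, β x y + β y x = B x y := fun x y => hβB x trivial y trivial
  have hspan' : sSup {U | InvariantFormsVanishOn (ρ.comp N.subtype) U} = ⊤ :=
    top_le_iff.mp (hspan ▸ sSup_le_sSup fun U hU => hU.2)
  exact ⟨fun v => β v v, B, polarizesTo_diag hβB,
    quadInvariant_diag hB hβ hβB hspan', hBnd⟩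

/-- if W is an irreducible FN-module that is not self-dual, then every self-dual
irreducible FG-module whose restriction to N contains W is of quadratic type. -/
theorem stmt_14 {F : Type} [Field F] [CharP F 2] [PerfectField F]
    {G : Type} [Group G] [Finite G] (N : Subgroup G) [N.Normal]
    (hsplit : ∀ H : Subgroup G, IsSplitting F ↥H)
    {W : Type} [AddCommGroup W] [Module F W] [FiniteDimensional F W]
    (σ : Representation F ↥N W) (hirrW : IsIrred σ) (hnsd : ¬ IsSelfDual σ)
    {V : Type} [AddCommGroup V] [Module F V] [FiniteDimensional F V]
    (ρ : Representation F G V) (hirrV : IsIrred ρ) (hsdV : IsSelfDual ρ)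
    (hover : EquivHom σ (ρ.comp N.subtype) ≠ ⊥) :
    HasQuadType ρ :=
  stmt_14_general N hsplit σ hirrW hnsd ρ hirrV hsdV hover
end
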